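/- arXiv:1501.04615 — 6 statements merged into one kernel-verified Lean document; each statement's English description precedes it below -/
import Mathlib

section
/- For every positive integer n, (n+1) · N^A_n(t) = t · Q_{n-1}(t) + t^n · Q_{n-1}(1/t), where N^A_n(t) = Σ_{k=1}^n (1/k) C(n-1,k-1) C(n,k-1) t^k and Q_{n-1}(t) = Σ_{k=1}^n C(n-1,k-1) C(n,k-1) t^{k-1}. -/
open Finset

/-- Type A Narayana polynomial `N^A_n(t)`, with convention `N^A_0 = 1`. -/
noncomputable def NA (n : ℕ) (t : ℝ) : ℝ :=
  if n = 0 then 1 else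
    ∑ k ∈ Finset.Icc 1 n, (1 / (k : ℝ)) * ((n - 1).choose (k - 1) : ℝ) * (n.choose (k - 1) : ℝ) * t ^ k

/-- Type B Narayana polynomial `N^B_n(t)`. -/
noncomputable def NB (n : ℕ) (t : ℝ) : ℝ :=
  ∑ k ∈ Finset.range (n + 1), ((n.choose k : ℝ)) ^ 2 * t ^ k

/-- `Q_n(t) = ∑_{k=0}^n C(n,k) C(n+1,k) t^k`, the derivative of `N^A_{n+1}`. -/
noncomputable def Qp (n : ℕ) (t : ℝ) : ℝ :=
  ∑ k ∈ Finset.range (n + 1), ((n.choose k : ℝ)) * (((n + 1).choose k : ℝ)) * t ^ k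

theorem stmt1 (n : ℕ) (hn : 1 ≤ n) (t : ℝ) (ht : t ≠ 0) :
    ((n : ℝ) + 1) * NA n t = t * Qp (n - 1) t + t ^ n * Qp (n - 1) (1 / t) := by
  obtain ⟨m, rfl⟩ : ∃ m, n = m + 1 := ⟨n - 1, (Nat.succ_pred_eq_of_pos hn).symm⟩
  simp only [NA, Qp, Nat.add_sub_cancel, if_neg (Nat.succ_ne_zero m)]
  rw [show Finset.Icc 1 (m+1) = Finset.Ico 1 (m+2) from (Finset.Ico_add_one_right_eq_Icc 1 (m+1)).symm,
    Finset.sum_Ico_eq_sum_range, show m + 2 - 1 = m + 1 from rfl, Finset.mul_sum, Finset.mul_sum, Finset.mul_sum,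
    ← Finset.sum_range_reflect (fun j => t ^ (m + 1) *
      ((m.choose j : ℝ) * ((m + 1).choose j : ℝ) * (1 / t) ^ j)) (m + 1),
    ← Finset.sum_add_distrib]
  simp only [Nat.add_sub_cancel]
  apply Finset.sum_congr rfl
  intro j hj
  have hjm : j ≤ m := by simpa using Finset.mem_range_succ_iff.mp hj
  have h1 : (1 + j) - 1 = j := by omega
  have h2 : m + 1 - 1 - j = m - j := by omega
  rw [h1]
  have hpow : t ^ (m + 1) * (1 / t) ^ (m - j) = t ^ (j + 1) := by
    rw [show m + 1 = (j + 1) + (m - j) by omega, pow_add, mul_assoc, ← mul_pow,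
      mul_one_div_cancel ht, one_pow, mul_one]
  have hc1 : m.choose (m - j) = m.choose j := Nat.choose_symm hjm
  have hc2 : (m + 1).choose (m - j) = (m + 1).choose (j + 1) := by
    have := Nat.choose_symm (n := m + 1) (k := j + 1) (by omega)
    rwa [show m + 1 - (j + 1) = m - j by omega] at this
  rw [hc1, hc2, show t ^ (m + 1) * ((m.choose j : ℝ) * ((m + 1).choose (j + 1) : ℝ) * (1 / t) ^ (m - j))
      = (m.choose j : ℝ) * ((m + 1).choose (j + 1) : ℝ) * (t ^ (m + 1) * (1 / t) ^ (m - j)) by ring,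
    hpow]
  have hnat : (m + 2) * (m + 1).choose j = ((m + 1).choose j + (m + 1).choose (j + 1)) * (j + 1) := by
    have h : (m + 2) * (m + 1).choose j = (m + 2).choose (j + 1) * (j + 1) :=
      Nat.add_one_mul_choose_eq (m + 1) j
    rw [Nat.choose_succ_succ] at h
    exact h
  have hnatR : ((m : ℝ) + 2) * ((m + 1).choose j : ℝ)
      = (((m + 1).choose j : ℝ) + ((m + 1).choose (j + 1) : ℝ)) * ((j : ℝ) + 1) := by
    exact_mod_cast hnat
  have hj1 : ((j : ℝ) + 1) ≠ 0 := by positivity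
  rw [show (1 : ℕ) + j = j + 1 by omega]
  push_cast
  field_simp
  linear_combination ((m.choose j : ℝ) * t ^ (j + 1)) * hnatR
end

section
/- For every positive integer n, Q_{n-1}(t) = Σ_{k=1}^n N^A_{k-1}(t) · N^B_{n-k}(t), where Q, N^A, N^B are as defined, with conventions N^A_0(t) = 1 and N^B_0(t) = 1. -/
open Finset

/-! ### auxiliary machinery -/

/-- Shift of a coefficient sequence (multiplication by `t`). -/
def sh (f : ℕ → ℝ) : ℕ → ℝ
  | 0 => 0
  | k + 1 => f k

@[simp] lemma sh_zero (f : ℕ → ℝ) : sh f 0 = 0 := rfl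
@[simp] lemma sh_succ (f : ℕ → ℝ) (k : ℕ) : sh f (k + 1) = f k := rfl

/-- Coefficients of `NB`. -/
def cB (n k : ℕ) : ℝ := ((n.choose k : ℝ)) ^ 2

/-- Coefficients of `Qp`. -/
def cQ (n k : ℕ) : ℝ := ((n.choose k : ℝ)) * (((n + 1).choose k : ℝ))

/-- Coefficients of `NA (n+1) / t`. -/
noncomputable def cA (n k : ℕ) : ℝ := (1 / ((k : ℝ) + 1)) * ((n.choose k : ℝ)) * (((n + 1).choose k : ℝ))

lemma tmul_sum (t : ℝ) (f : ℕ → ℝ) (N : ℕ) (h : f N = 0) :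
    t * ∑ k ∈ Finset.range (N + 1), f k * t ^ k
      = ∑ k ∈ Finset.range (N + 1), sh f k * t ^ k := by
  rw [Finset.mul_sum, Finset.sum_range_succ _ N, h, Finset.sum_range_succ']
  simp only [sh_zero, sh_succ, zero_mul, add_zero, pow_zero, mul_zero]
  exact Finset.sum_congr rfl fun k _ => by ring

lemma NB_eq_sum (t : ℝ) (n N : ℕ) (h : n < N) :
    NB n t = ∑ k ∈ Finset.range N, cB n k * t ^ k := by
  apply Finset.sum_subset (Finset.range_subset_range.mpr h)
  intro k hk hk2
  simp only [Finset.mem_range, not_lt] at hk hk2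
  simp [cB, Nat.choose_eq_zero_of_lt (by omega : n < k)]

lemma Qp_eq_sum (t : ℝ) (n N : ℕ) (h : n < N) :
    Qp n t = ∑ k ∈ Finset.range N, cQ n k * t ^ k := by
  apply Finset.sum_subset (Finset.range_subset_range.mpr h)
  intro k hk hk2
  simp only [Finset.mem_range, not_lt] at hk hk2
  simp [cQ, Nat.choose_eq_zero_of_lt (by omega : n < k)]

lemma L0 (t : ℝ) (n : ℕ) : 2 * Qp n t = NB (n + 1) t + (1 - t) * NB n t := by
  have hB0 : NB n t = ∑ k ∈ Finset.range (n + 2), cB n k * t ^ k :=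
    NB_eq_sum t n (n + 2) (by omega)
  have hsh : t * NB n t = ∑ k ∈ Finset.range (n + 2), sh (cB n) k * t ^ k := by
    rw [hB0]
    exact tmul_sum t (cB n) (n + 1) (by simp [cB, Nat.choose_eq_zero_of_lt])
  rw [show (1 - t) * NB n t = NB n t - t * NB n t by ring,
    Qp_eq_sum t n (n + 2) (by omega), NB_eq_sum t (n + 1) (n + 2) (by omega), hsh, hB0,
    Finset.mul_sum, ← Finset.sum_sub_distrib, ← Finset.sum_add_distrib]
  refine Finset.sum_congr rfl fun k _ => ?_
  cases k with
  | zero => simp [cQ, cB]; norm_num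
  | succ j =>
    have hP : (((n + 1).choose (j + 1) : ℕ) : ℝ) = (n.choose j : ℝ) + (n.choose (j + 1) : ℝ) := by
      rw [Nat.choose_succ_succ]; push_cast; ring
    simp only [cQ, cB, sh_succ]
    rw [hP]; ring

lemma L1 (t : ℝ) (n : ℕ) :
    ((n : ℝ) + 2) * NB (n + 2) t
      = (2 * (n : ℝ) + 3) * ((1 + t) * NB (n + 1) t)
        - ((n : ℝ) + 1) * ((1 - t) ^ 2 * NB n t) := by
  have hB2 : NB (n + 2) t = ∑ k ∈ Finset.range (n + 4), cB (n + 2) k * t ^ k :=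
    NB_eq_sum t (n + 2) (n + 4) (by omega)
  have hB1 : NB (n + 1) t = ∑ k ∈ Finset.range (n + 4), cB (n + 1) k * t ^ k :=
    NB_eq_sum t (n + 1) (n + 4) (by omega)
  have hB0 : NB n t = ∑ k ∈ Finset.range (n + 4), cB n k * t ^ k :=
    NB_eq_sum t n (n + 4) (by omega)
  have h1s : t * NB (n + 1) t = ∑ k ∈ Finset.range (n + 4), sh (cB (n + 1)) k * t ^ k := by
    rw [hB1]; exact tmul_sum t _ (n + 3) (by simp [cB, Nat.choose_eq_zero_of_lt])
  have h0s : t * NB n t = ∑ k ∈ Finset.range (n + 4), sh (cB n) k * t ^ k := by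
    rw [hB0]; exact tmul_sum t _ (n + 3) (by simp [cB, Nat.choose_eq_zero_of_lt])
  have h0ss : t * (t * NB n t) = ∑ k ∈ Finset.range (n + 4), sh (sh (cB n)) k * t ^ k := by
    rw [h0s]; exact tmul_sum t _ (n + 3) (by simp [sh, cB, Nat.choose_eq_zero_of_lt])
  rw [show (1 + t) * NB (n + 1) t = NB (n + 1) t + t * NB (n + 1) t by ring,
    show (1 - t) ^ 2 * NB n t = NB n t - 2 * (t * NB n t) + t * (t * NB n t) by ring,
    hB2, h1s, hB1, h0ss, h0s, hB0]
  simp only [Finset.mul_sum, ← Finset.sum_add_distrib, ← Finset.sum_sub_distrib]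
  refine Finset.sum_congr rfl fun k _ => ?_
  match k with
  | 0 => simp [cB]; ring
  | 1 => simp [cB, Nat.choose_one_right]; push_cast; ring
  | (j + 2) =>
    simp only [cB, sh_succ]
    set x : ℝ := (n.choose j : ℝ) with hx
    set y : ℝ := (n.choose (j + 1) : ℝ) with hy
    set z : ℝ := (n.choose (j + 2) : ℝ) with hz
    have hw : (((n + 1).choose (j + 1) : ℕ) : ℝ) = x + y := by
      rw [Nat.choose_succ_succ]; push_cast; ring
    have hv : (((n + 1).choose (j + 2) : ℕ) : ℝ) = y + z := by
      rw [Nat.choose_succ_succ]; push_cast; ring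
    have hu : (((n + 2).choose (j + 2) : ℕ) : ℝ) = x + 2 * y + z := by
      rw [Nat.choose_succ_succ (n + 1) (j + 1)]; push_cast; rw [hw, hv]; ring
    have h1 : ((n : ℝ) + 1) * x = ((j : ℝ) + 1) * (x + y) := by
      have := Nat.add_one_mul_choose_eq n j
      have hc : (((n + 1) * n.choose j : ℕ) : ℝ) = (((n + 1).choose (j + 1) * (j + 1) : ℕ) : ℝ) := by
        norm_cast
      push_cast at hc
      rw [hw] at hc
      linarith [hc]
    have h2 : ((n : ℝ) + 1) * y = ((j : ℝ) + 2) * (y + z) := by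
      have := Nat.add_one_mul_choose_eq n (j + 1)
      have hc : (((n + 1) * n.choose (j + 1) : ℕ) : ℝ)
          = (((n + 1).choose (j + 2) * (j + 2) : ℕ) : ℝ) := by
        norm_cast
      push_cast at hc
      rw [hv] at hc
      linarith [hc]
    rw [hu, hv, hw]
    have hj : ((j : ℝ) + 2) ≠ 0 := by positivity
    apply mul_left_cancel₀ hj
    linear_combination (2 * ((n : ℝ) + 1) * y * t ^ (j + 2)) * h1
      - (2 * (y + ((n : ℝ) + 2) * x) * t ^ (j + 2)) * h2

lemma NA_succ_repr (t : ℝ) (n : ℕ) :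
    NA (n + 1) t = ∑ i ∈ Finset.range (n + 1), cA n i * t ^ (i + 1) := by
  rw [NA, if_neg (by omega)]
  rw [← Finset.Ico_add_one_right_eq_Icc, Finset.sum_Ico_eq_sum_range]
  simp only [show n + 1 + 1 - 1 = n + 1 from rfl]
  refine Finset.sum_congr rfl fun i _ => ?_
  simp only [cA, Nat.add_sub_cancel, Nat.add_sub_cancel_left, show 1 + i - 1 = i by omega,
    show n + 1 - 1 = n from rfl]
  push_cast
  ring

lemma NA_succ_eq (t : ℝ) (n : ℕ) :
    NA (n + 1) t = ∑ k ∈ Finset.range (n + 4), sh (cA n) k * t ^ k := by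
  have h2 : NA (n + 1) t = t * ∑ i ∈ Finset.range (n + 4), cA n i * t ^ i := by
    rw [NA_succ_repr, Finset.mul_sum]
    rw [show ∑ i ∈ Finset.range (n + 4), t * (cA n i * t ^ i)
        = ∑ i ∈ Finset.range (n + 4), cA n i * t ^ (i + 1) from
      Finset.sum_congr rfl fun i _ => by ring]
    apply Finset.sum_subset (Finset.range_subset_range.mpr (by omega))
    intro k hk hk2
    simp only [Finset.mem_range, not_lt] at hk hk2
    simp [cA, Nat.choose_eq_zero_of_lt (by omega : n < k)]
  rw [h2]
  exact tmul_sum t _ (n + 3) (by simp [cA, Nat.choose_eq_zero_of_lt])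

lemma L2 (t : ℝ) (n : ℕ) :
    2 * NA (n + 1) t
      = 2 * ((1 + t) * NB (n + 1) t) - NB (n + 2) t - (1 - t) ^ 2 * NB n t := by
  have hB2 : NB (n + 2) t = ∑ k ∈ Finset.range (n + 4), cB (n + 2) k * t ^ k :=
    NB_eq_sum t (n + 2) (n + 4) (by omega)
  have hB1 : NB (n + 1) t = ∑ k ∈ Finset.range (n + 4), cB (n + 1) k * t ^ k :=
    NB_eq_sum t (n + 1) (n + 4) (by omega)
  have hB0 : NB n t = ∑ k ∈ Finset.range (n + 4), cB n k * t ^ k :=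
    NB_eq_sum t n (n + 4) (by omega)
  have h1s : t * NB (n + 1) t = ∑ k ∈ Finset.range (n + 4), sh (cB (n + 1)) k * t ^ k := by
    rw [hB1]; exact tmul_sum t _ (n + 3) (by simp [cB, Nat.choose_eq_zero_of_lt])
  have h0s : t * NB n t = ∑ k ∈ Finset.range (n + 4), sh (cB n) k * t ^ k := by
    rw [hB0]; exact tmul_sum t _ (n + 3) (by simp [cB, Nat.choose_eq_zero_of_lt])
  have h0ss : t * (t * NB n t) = ∑ k ∈ Finset.range (n + 4), sh (sh (cB n)) k * t ^ k := by
    rw [h0s]; exact tmul_sum t _ (n + 3) (by simp [sh, cB, Nat.choose_eq_zero_of_lt])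
  rw [NA_succ_eq,
    show (1 + t) * NB (n + 1) t = NB (n + 1) t + t * NB (n + 1) t by ring,
    show (1 - t) ^ 2 * NB n t = NB n t - 2 * (t * NB n t) + t * (t * NB n t) by ring,
    hB2, h1s, hB1, h0ss, h0s, hB0]
  simp only [Finset.mul_sum, ← Finset.sum_add_distrib, ← Finset.sum_sub_distrib]
  refine Finset.sum_congr rfl fun k _ => ?_
  match k with
  | 0 => simp [cB]; ring
  | 1 => simp [sh, cA, cB, Nat.choose_one_right]; push_cast; ring
  | (j + 2) =>
    simp only [cB, cA, sh_succ]
    set x : ℝ := (n.choose j : ℝ) with hx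
    set y : ℝ := (n.choose (j + 1) : ℝ) with hy
    set z : ℝ := (n.choose (j + 2) : ℝ) with hz
    have hw : (((n + 1).choose (j + 1) : ℕ) : ℝ) = x + y := by
      rw [Nat.choose_succ_succ]; push_cast; ring
    have hv : (((n + 1).choose (j + 2) : ℕ) : ℝ) = y + z := by
      rw [Nat.choose_succ_succ]; push_cast; ring
    have hu : (((n + 2).choose (j + 2) : ℕ) : ℝ) = x + 2 * y + z := by
      rw [Nat.choose_succ_succ (n + 1) (j + 1)]; push_cast; rw [hw, hv]; ring
    have h1 : ((n : ℝ) + 1) * x = ((j : ℝ) + 1) * (x + y) := by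
      have := Nat.add_one_mul_choose_eq n j
      have hc : (((n + 1) * n.choose j : ℕ) : ℝ) = (((n + 1).choose (j + 1) * (j + 1) : ℕ) : ℝ) := by
        norm_cast
      push_cast at hc
      rw [hw] at hc
      linarith [hc]
    have h2 : ((n : ℝ) + 1) * y = ((j : ℝ) + 2) * (y + z) := by
      have := Nat.add_one_mul_choose_eq n (j + 1)
      have hc : (((n + 1) * n.choose (j + 1) : ℕ) : ℝ)
          = (((n + 1).choose (j + 2) * (j + 2) : ℕ) : ℝ) := by
        norm_cast
      push_cast at hc
      rw [hv] at hc
      linarith [hc]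
    rw [hu, hv, hw]
    have hj : ((j : ℝ) + 2) ≠ 0 := by positivity
    apply mul_left_cancel₀ hj
    have hdiv : ((j : ℝ) + 2) * (2 * (1 / ((j : ℝ) + 1 + 1) * y * (x + y) * t ^ (j + 2)))
        = 2 * y * (x + y) * t ^ (j + 2) := by
      field_simp
      ring
    push_cast
    rw [hdiv]
    linear_combination (2 * y * t ^ (j + 2)) * h1 - (2 * x * t ^ (j + 2)) * h2

@[simp] lemma NB_zero (t : ℝ) : NB 0 t = 1 := by simp [NB]

lemma NB_one (t : ℝ) : NB 1 t = 1 + t := by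
  simp [NB, Finset.sum_range_succ]

@[simp] lemma NA_zero (t : ℝ) : NA 0 t = 1 := by simp [NA]

/-- Convolution `(B * B)_m`. -/
noncomputable def Pc (t : ℝ) (m : ℕ) : ℝ := ∑ i ∈ Finset.range (m + 1), NB i t * NB (m - i) t

/-- Convolution `(x B' * B)_n`. -/
noncomputable def Ec (t : ℝ) (n : ℕ) : ℝ :=
  ∑ i ∈ Finset.range (n + 1), (i : ℝ) * NB i t * NB (n - i) t

lemma F1 (t : ℝ) (n : ℕ) : (n : ℝ) * Pc t n = 2 * Ec t n := by
  have hrefl : Ec t n = ∑ i ∈ Finset.range (n + 1),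
      ((n - i : ℕ) : ℝ) * NB (n - i) t * NB (n - (n - i)) t := by
    unfold Ec
    exact (Finset.sum_range_reflect (fun i => (i : ℝ) * NB i t * NB (n - i) t) (n + 1)).symm
  rw [two_mul]
  nth_rewrite 2 [hrefl]
  unfold Ec Pc
  rw [Finset.mul_sum, ← Finset.sum_add_distrib]
  refine Finset.sum_congr rfl fun i hi => ?_
  have hi' : i ≤ n := by simpa [Nat.lt_succ_iff] using hi
  rw [Nat.sub_sub_self hi', Nat.cast_sub hi']
  ring

lemma L1pp (t : ℝ) (m : ℕ) :
    Ec t (m + 2) - 2 * (1 + t) * Ec t (m + 1) + (1 - t) ^ 2 * Ec t m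
      = (1 + t) * Pc t (m + 1) - (1 - t) ^ 2 * Pc t m := by
  have e2 : Ec t (m + 2) = (1 + t) * NB (m + 1) t
      + ∑ j ∈ Finset.range (m + 1), (((j : ℝ) + 2) * NB (j + 2) t) * NB (m - j) t := by
    unfold Ec
    rw [Finset.sum_range_succ', Finset.sum_range_succ']
    have : ∀ j ∈ Finset.range (m + 1),
        ((j + 1 + 1 : ℕ) : ℝ) * NB (j + 1 + 1) t * NB (m + 2 - (j + 1 + 1)) t
          = (((j : ℝ) + 2) * NB (j + 2) t) * NB (m - j) t := by
      intro j _
      have : m + 2 - (j + 1 + 1) = m - j := by omega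
      rw [this]; push_cast; ring
    rw [Finset.sum_congr rfl this]
    rw [NB_one]
    push_cast
    ring
  have e1 : Ec t (m + 1)
      = ∑ j ∈ Finset.range (m + 1), (((j : ℝ) + 1) * NB (j + 1) t) * NB (m - j) t := by
    unfold Ec
    rw [Finset.sum_range_succ']
    have : ∀ j ∈ Finset.range (m + 1),
        ((j + 1 : ℕ) : ℝ) * NB (j + 1) t * NB (m + 1 - (j + 1)) t
          = (((j : ℝ) + 1) * NB (j + 1) t) * NB (m - j) t := by
      intro j _
      have : m + 1 - (j + 1) = m - j := by omega
      rw [this]; push_cast; ring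
    rw [Finset.sum_congr rfl this]
    push_cast
    ring
  have e0 : Ec t m = ∑ j ∈ Finset.range (m + 1), ((j : ℝ) * NB j t) * NB (m - j) t := by
    unfold Ec; exact Finset.sum_congr rfl fun j _ => by ring
  have p1 : Pc t (m + 1)
      = NB (m + 1) t + ∑ j ∈ Finset.range (m + 1), NB (j + 1) t * NB (m - j) t := by
    unfold Pc
    rw [Finset.sum_range_succ']
    have : ∀ j ∈ Finset.range (m + 1),
        NB (j + 1) t * NB (m + 1 - (j + 1)) t = NB (j + 1) t * NB (m - j) t := by
      intro j _
      have : m + 1 - (j + 1) = m - j := by omega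
      rw [this]
    rw [Finset.sum_congr rfl this]
    simp [add_comm]
  have key : ∀ j ∈ Finset.range (m + 1),
      (((j : ℝ) + 2) * NB (j + 2) t) * NB (m - j) t
        - 2 * (1 + t) * ((((j : ℝ) + 1) * NB (j + 1) t) * NB (m - j) t)
        + (1 - t) ^ 2 * (((j : ℝ) * NB j t) * NB (m - j) t)
      = (1 + t) * (NB (j + 1) t * NB (m - j) t) - (1 - t) ^ 2 * (NB j t * NB (m - j) t) := by
    intro j _
    linear_combination NB (m - j) t * L1 t j
  have hs : ∑ j ∈ Finset.range (m + 1),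
      ((((j : ℝ) + 2) * NB (j + 2) t) * NB (m - j) t
        - 2 * (1 + t) * ((((j : ℝ) + 1) * NB (j + 1) t) * NB (m - j) t)
        + (1 - t) ^ 2 * (((j : ℝ) * NB j t) * NB (m - j) t))
      = ∑ j ∈ Finset.range (m + 1),
        ((1 + t) * (NB (j + 1) t * NB (m - j) t) - (1 - t) ^ 2 * (NB j t * NB (m - j) t)) :=
    Finset.sum_congr rfl key
  simp only [Finset.sum_add_distrib, Finset.sum_sub_distrib, ← Finset.mul_sum] at hs
  rw [e2, e1, e0, p1]
  unfold Pc
  linear_combination hs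

lemma L3a (t : ℝ) : Pc t 1 = 2 * (1 + t) * Pc t 0 := by
  simp [Pc, Finset.sum_range_succ, NB_one]
  ring

lemma L3b (t : ℝ) (m : ℕ) :
    Pc t (m + 2) = 2 * (1 + t) * Pc t (m + 1) - (1 - t) ^ 2 * Pc t m := by
  have h2 := F1 t (m + 2)
  have h1 := F1 t (m + 1)
  have h0 := F1 t m
  have hL := L1pp t m
  have hm : ((m : ℝ) + 2) ≠ 0 := by positivity
  apply mul_left_cancel₀ hm
  push_cast at h2 h1 h0
  linear_combination h2 + 2 * hL - 2 * (1 + t) * h1 + (1 - t) ^ 2 * h0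

lemma main' (t : ℝ) (m : ℕ) :
    2 * ∑ j ∈ Finset.range (m + 1), NA j t * NB (m - j) t
      = NB (m + 1) t + (1 - t) * NB m t := by
  cases m with
  | zero => simp [NB_one]; ring
  | succ m =>
    rw [Finset.sum_range_succ']
    have hterm : ∀ j ∈ Finset.range (m + 1),
        NA (j + 1) t * NB (m + 1 - (j + 1)) t = NA (j + 1) t * NB (m - j) t := by
      intro j _
      have : m + 1 - (j + 1) = m - j := by omega
      rw [this]
    rw [Finset.sum_congr rfl hterm]
    have key : ∀ j ∈ Finset.range (m + 1),
        2 * (NA (j + 1) t * NB (m - j) t)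
          = (2 * ((1 + t) * NB (j + 1) t) - NB (j + 2) t - (1 - t) ^ 2 * NB j t)
              * NB (m - j) t := by
      intro j _
      linear_combination NB (m - j) t * L2 t j
    have hS1 : ∑ j ∈ Finset.range (m + 1), NB (j + 1) t * NB (m - j) t
        = Pc t (m + 1) - NB (m + 1) t := by
      have p1 : Pc t (m + 1)
          = NB (m + 1) t + ∑ j ∈ Finset.range (m + 1), NB (j + 1) t * NB (m - j) t := by
        unfold Pc
        rw [Finset.sum_range_succ']
        have : ∀ j ∈ Finset.range (m + 1),
            NB (j + 1) t * NB (m + 1 - (j + 1)) t = NB (j + 1) t * NB (m - j) t := by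
          intro j _
          have : m + 1 - (j + 1) = m - j := by omega
          rw [this]
        rw [Finset.sum_congr rfl this]
        simp [add_comm]
      linarith [p1]
    have hS2 : ∑ j ∈ Finset.range (m + 1), NB (j + 2) t * NB (m - j) t
        = Pc t (m + 2) - NB (m + 2) t - (1 + t) * NB (m + 1) t := by
      have p2 : Pc t (m + 2)
          = NB (m + 2) t + NB 1 t * NB (m + 1) t
            + ∑ j ∈ Finset.range (m + 1), NB (j + 2) t * NB (m - j) t := by
        unfold Pc
        rw [Finset.sum_range_succ', Finset.sum_range_succ']
        have : ∀ j ∈ Finset.range (m + 1),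
            NB (j + 1 + 1) t * NB (m + 2 - (j + 1 + 1)) t = NB (j + 2) t * NB (m - j) t := by
          intro j _
          have : m + 2 - (j + 1 + 1) = m - j := by omega
          rw [this]
        rw [Finset.sum_congr rfl this]
        simp
        ring
      rw [NB_one] at p2
      linarith [p2]
    have hS3 : ∑ j ∈ Finset.range (m + 1), NB j t * NB (m - j) t = Pc t m := rfl
    have hL3 : Pc t (m + 2) = 2 * (1 + t) * Pc t (m + 1) - (1 - t) ^ 2 * Pc t m := L3b t m
    calc 2 * ((∑ j ∈ Finset.range (m + 1), NA (j + 1) t * NB (m - j) t)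
            + NA 0 t * NB (m + 1 - 0) t)
        = (∑ j ∈ Finset.range (m + 1), 2 * (NA (j + 1) t * NB (m - j) t))
            + 2 * NB (m + 1) t := by
          rw [← Finset.mul_sum]; simp; ring
      _ = (∑ j ∈ Finset.range (m + 1),
            (2 * ((1 + t) * NB (j + 1) t) - NB (j + 2) t - (1 - t) ^ 2 * NB j t)
              * NB (m - j) t) + 2 * NB (m + 1) t := by
          rw [Finset.sum_congr rfl key]
      _ = 2 * (1 + t) * (∑ j ∈ Finset.range (m + 1), NB (j + 1) t * NB (m - j) t)
            - (∑ j ∈ Finset.range (m + 1), NB (j + 2) t * NB (m - j) t)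
            - (1 - t) ^ 2 * (∑ j ∈ Finset.range (m + 1), NB j t * NB (m - j) t)
            + 2 * NB (m + 1) t := by
          have expand : ∀ j ∈ Finset.range (m + 1),
              (2 * ((1 + t) * NB (j + 1) t) - NB (j + 2) t - (1 - t) ^ 2 * NB j t)
                  * NB (m - j) t
                = 2 * (1 + t) * (NB (j + 1) t * NB (m - j) t)
                    - NB (j + 2) t * NB (m - j) t
                    - (1 - t) ^ 2 * (NB j t * NB (m - j) t) := fun j _ => by ring
          rw [Finset.sum_congr rfl expand]
          simp only [Finset.sum_sub_distrib, ← Finset.mul_sum]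
      _ = NB (m + 2) t + (1 - t) * NB (m + 1) t := by
          rw [hS1, hS2, hS3]
          linear_combination (-1 : ℝ) * hL3

theorem stmt2 (n : ℕ) (hn : 1 ≤ n) (t : ℝ) :
    Qp (n - 1) t = ∑ k ∈ Finset.Icc 1 n, NA (k - 1) t * NB (n - k) t := by
  obtain ⟨m, rfl⟩ : ∃ m, n = m + 1 := ⟨n - 1, by omega⟩
  have hreidx : ∑ k ∈ Finset.Icc 1 (m + 1), NA (k - 1) t * NB (m + 1 - k) t
      = ∑ j ∈ Finset.range (m + 1), NA j t * NB (m - j) t := by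
    rw [← Finset.Ico_add_one_right_eq_Icc, Finset.sum_Ico_eq_sum_range]
    refine Finset.sum_congr rfl fun j _ => ?_
    have h1 : 1 + j - 1 = j := by omega
    have h2 : m + 1 - (1 + j) = m - j := by omega
    rw [h1, h2]
  rw [show m + 1 - 1 = m from rfl, hreidx]
  have h0 := L0 t m
  have h1 := main' t m
  linarith [h0, h1]
end

section
/- For every positive integer n, Q_n(t) = (n+1) · N^A_n(t) + Σ_{k=1}^n N^A_{k-1}(t) · Q_{n-k}(t). -/
open Finset

/-!
Write `C_n = ∑_{i+j=n} N_i N_j` for `N = N^A`. Since `N_{j+1}' = Q_j` and `N_0' = 0`, the sum in the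
theorem is `∑_{i+j=n} N_i N_j' = C_n' / 2`. Differentiating the Narayana convolution identity
`C_n = N_{n+1} - (t - 1) N_n` and using `Q_n + (t - 1) N_n' = (2n + 1) N_n`, which is a binomial
identity coefficientwise, gives the claim. The convolution identity is proved by induction on `n`:
both sides vanish at `t = 0`, and their derivatives agree because the same relation turns
`C_{n+1}' / 2` into `(n + 1) C_n - (t - 1) C_n' / 2`.
-/
lemma NA_zero_s3 : NA 0 = fun _ => 1 := by
  funext t
  simp [NA]

lemma NA_succ (n : ℕ) (t : ℝ) :
    NA (n + 1) t = ∑ i ∈ range (n + 1),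
      (n.choose i : ℝ) * ((n + 1).choose i : ℝ) / ((i : ℝ) + 1) * t ^ (i + 1) := by
  rw [NA, if_neg n.succ_ne_zero, ← Ico_add_one_right_eq_Icc, sum_Ico_eq_sum_range]
  refine sum_congr rfl fun i _ => ?_
  simp only [add_tsub_cancel_right, add_comm 1 i, Nat.cast_add, Nat.cast_one]
  ring

lemma NA_succ_zero (n : ℕ) : NA (n + 1) 0 = 0 := by
  simp [NA_succ]

lemma NA_one (t : ℝ) : NA 1 t = t := by
  simp [NA_succ]

lemma hasDerivAt_NA_succ (n : ℕ) (t : ℝ) : HasDerivAt (NA (n + 1)) (Qp n t) t := by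
  rw [funext (NA_succ n), Qp]
  refine (HasDerivAt.fun_sum fun i _ => (hasDerivAt_pow (i + 1) t).const_mul
    ((n.choose i : ℝ) * ((n + 1).choose i : ℝ) / ((i : ℝ) + 1))).congr_deriv
    (sum_congr rfl fun i _ => ?_)
  push_cast
  field_simp

lemma deriv_NA_zero (t : ℝ) : deriv (NA 0) t = 0 := by
  simp [NA_zero_s3]

lemma deriv_NA_succ (n : ℕ) (t : ℝ) : deriv (NA (n + 1)) t = Qp n t :=
  (hasDerivAt_NA_succ n t).deriv

lemma differentiable_NA (n : ℕ) : Differentiable ℝ (NA n) := by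
  cases n with
  | zero => simp [NA_zero_s3]
  | succ n => exact fun t => (hasDerivAt_NA_succ n t).differentiableAt

lemma choose_mul_choose_recurrence (n i : ℕ) (hi : i ≤ n) :
    ((i : ℝ) + 1) * ((n + 1).choose (i + 1) * (n + 2).choose (i + 1) + n.choose i * (n + 1).choose i
      - n.choose (i + 1) * (n + 1).choose (i + 1))
    = (2 * n + 3) * (n.choose i * (n + 1).choose i) := by
  have hi₁ : (i : ℝ) + 1 ≠ 0 := by positivity
  have hi₂ : (n : ℝ) + 1 - i ≠ 0 := by
    have : (i : ℝ) ≤ n := by exact_mod_cast hi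
    linarith
  have h₁ : ((n + 1).choose (i + 1) : ℝ) = (n + 1) * n.choose i / (i + 1) := by
    rw [eq_div_iff hi₁]; exact_mod_cast (Nat.add_one_mul_choose_eq n i).symm
  have h₂ : ((n + 2).choose (i + 1) : ℝ) = (n + 2) * (n + 1).choose i / (i + 1) := by
    rw [eq_div_iff hi₁]; exact_mod_cast (Nat.add_one_mul_choose_eq (n + 1) i).symm
  have h₃ : (n.choose (i + 1) : ℝ) = n.choose i * (n - i) / (i + 1) := by
    rw [eq_div_iff hi₁, ← Nat.cast_sub hi]; exact_mod_cast Nat.choose_succ_right_eq n i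
  have h₄ : ((n + 1).choose i : ℝ) = n.choose i * (n + 1) / (n + 1 - i) := by
    have h := Nat.choose_mul_succ_eq n i
    rw [Nat.sub_add_comm hi] at h
    rw [eq_div_iff hi₂, show (n : ℝ) + 1 - i = (n - i : ℕ) + 1 by rw [Nat.cast_sub hi]; ring]
    exact_mod_cast h.symm
  rw [h₁, h₂, h₃, h₄]
  field_simp
  ring

lemma Qp_succ_add_sub_one_mul (n : ℕ) (t : ℝ) :
    Qp (n + 1) t + (t - 1) * Qp n t = (2 * n + 3) * NA (n + 1) t := by
  have hterm : ∀ i ∈ range (n + 1),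
      ((n + 1).choose (i + 1) * (n + 2).choose (i + 1) : ℝ) * t ^ (i + 1)
        + (n.choose i * (n + 1).choose i : ℝ) * t ^ (i + 1)
        - (n.choose (i + 1) * (n + 1).choose (i + 1) : ℝ) * t ^ (i + 1)
      = (2 * n + 3) *
          ((n.choose i : ℝ) * ((n + 1).choose i : ℝ) / ((i : ℝ) + 1) * t ^ (i + 1)) := by
    intro i hi
    have h := choose_mul_choose_recurrence n i (Nat.lt_succ_iff.mp (mem_range.mp hi))
    field_simp
    linear_combination t ^ (i + 1) * h
  have hQ₁ : Qp (n + 1) t = ∑ i ∈ range (n + 1),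
      ((n + 1).choose (i + 1) * (n + 2).choose (i + 1) : ℝ) * t ^ (i + 1) + 1 := by
    rw [Qp, sum_range_succ']
    simp
  have hQ₀ : Qp n t =
      ∑ i ∈ range (n + 1), (n.choose (i + 1) * (n + 1).choose (i + 1) : ℝ) * t ^ (i + 1) + 1 := by
    rw [Qp, sum_range_succ', sum_range_succ]
    simp
  have htQ : t * Qp n t =
      ∑ i ∈ range (n + 1), (n.choose i * (n + 1).choose i : ℝ) * t ^ (i + 1) := by
    rw [Qp, mul_sum]
    exact sum_congr rfl fun i _ => by ring
  calc Qp (n + 1) t + (t - 1) * Qp n t = Qp (n + 1) t + t * Qp n t - Qp n t := by ring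
    _ = (2 * n + 3) * NA (n + 1) t := by
      rw [NA_succ, mul_sum, ← sum_congr rfl hterm, sum_sub_distrib, sum_add_distrib, htQ, hQ₀, hQ₁]
      ring

lemma Qp_eq_deriv_NA (n : ℕ) (t : ℝ) :
    Qp n t = (2 * n + 1) * NA n t - (t - 1) * deriv (NA n) t := by
  cases n with
  | zero => simp [Qp, NA_zero_s3]
  | succ n =>
    rw [deriv_NA_succ]
    push_cast
    linear_combination Qp_succ_add_sub_one_mul n t

lemma two_mul_sum_antidiagonal_snd_mul {R : Type*} [CommSemiring R] (f : ℕ → R) (n : ℕ) :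
    2 * ∑ p ∈ antidiagonal n, (p.2 : R) * (f p.1 * f p.2)
      = n * ∑ p ∈ antidiagonal n, f p.1 * f p.2 := by
  have hswap := Nat.sum_antidiagonal_swap (f := fun p => (p.2 : R) * (f p.1 * f p.2)) (n := n)
  rw [two_mul]
  nth_rewrite 1 [← hswap]
  rw [← sum_add_distrib, mul_sum]
  refine sum_congr rfl fun p hp => ?_
  rw [← (mem_antidiagonal.mp hp)]
  simp only [Prod.fst_swap, Prod.snd_swap, Nat.cast_add]
  ring

noncomputable def narayanaConv (n : ℕ) (t : ℝ) : ℝ :=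
  ∑ p ∈ antidiagonal n, NA p.1 t * NA p.2 t

lemma hasDerivAt_narayanaConv (n : ℕ) (t : ℝ) :
    HasDerivAt (narayanaConv n) (2 * ∑ p ∈ antidiagonal n, NA p.1 t * deriv (NA p.2) t) t := by
  have h := HasDerivAt.fun_sum fun (p : ℕ × ℕ) (_ : p ∈ antidiagonal n) =>
    ((differentiable_NA p.1 t).hasDerivAt).mul (differentiable_NA p.2 t).hasDerivAt
  refine h.congr_deriv ?_
  rw [sum_add_distrib, two_mul]
  congr 1
  rw [← Nat.sum_antidiagonal_swap]
  exact sum_congr rfl fun p _ => mul_comm _ _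

lemma narayanaConv_succ_apply_zero (n : ℕ) : narayanaConv (n + 1) 0 = 0 := by
  refine sum_eq_zero fun p hp => ?_
  rcases p with ⟨_ | i, j⟩
  · obtain rfl : j = n + 1 := by simpa using hp
    simp [NA_succ_zero]
  · simp [NA_succ_zero]

lemma sum_antidiagonal_succ_NA_mul_deriv (n : ℕ) (t : ℝ) :
    ∑ p ∈ antidiagonal (n + 1), NA p.1 t * deriv (NA p.2) t
      = (n + 1) * narayanaConv n t
          - (t - 1) * ∑ p ∈ antidiagonal n, NA p.1 t * deriv (NA p.2) t := by
  calc ∑ p ∈ antidiagonal (n + 1), NA p.1 t * deriv (NA p.2) t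
      = ∑ p ∈ antidiagonal n, NA p.1 t * Qp p.2 t := by
        simp [Nat.sum_antidiagonal_succ', deriv_NA_zero, deriv_NA_succ]
    _ = 2 * ∑ p ∈ antidiagonal n, (p.2 : ℝ) * (NA p.1 t * NA p.2 t) + narayanaConv n t
          - (t - 1) * ∑ p ∈ antidiagonal n, NA p.1 t * deriv (NA p.2) t := by
        simp only [narayanaConv, mul_sum, ← sum_add_distrib, ← sum_sub_distrib]
        exact sum_congr rfl fun p _ => by rw [Qp_eq_deriv_NA]; ring
    _ = _ := by
        rw [two_mul_sum_antidiagonal_snd_mul (fun i => NA i t) n, narayanaConv]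
        ring

lemma sum_antidiagonal_NA_mul_deriv_of_narayanaConv {n : ℕ}
    (h : ∀ t, narayanaConv n t = NA (n + 1) t - (t - 1) * NA n t) (t : ℝ) :
    ∑ p ∈ antidiagonal n, NA p.1 t * deriv (NA p.2) t = Qp n t - (n + 1) * NA n t := by
  have hconv := hasDerivAt_narayanaConv n t
  rw [funext h] at hconv
  have hrhs := (hasDerivAt_NA_succ n t).sub
    (((hasDerivAt_id' t).sub_const 1).mul (differentiable_NA n t).hasDerivAt)
  linear_combination (hconv.unique hrhs - Qp_eq_deriv_NA n t) / 2

lemma narayanaConv_succ_eq {n : ℕ}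
    (h : ∀ t, narayanaConv n t = NA (n + 1) t - (t - 1) * NA n t) (t : ℝ) :
    narayanaConv (n + 1) t = NA (n + 2) t - (t - 1) * NA (n + 1) t := by
  set F := fun s => narayanaConv (n + 1) s - (NA (n + 2) s - (s - 1) * NA (n + 1) s)
  have hF : ∀ s, HasDerivAt F 0 s := fun s =>
    ((hasDerivAt_narayanaConv (n + 1) s).sub ((hasDerivAt_NA_succ (n + 1) s).sub
      (((hasDerivAt_id' s).sub_const 1).mul (hasDerivAt_NA_succ n s)))).congr_deriv <| by
        rw [sum_antidiagonal_succ_NA_mul_deriv, sum_antidiagonal_NA_mul_deriv_of_narayanaConv h, h]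
        linear_combination -Qp_succ_add_sub_one_mul n s
  have hF0 : F 0 = 0 := by
    simp [F, narayanaConv_succ_apply_zero, NA_succ_zero]
  have hconst := is_const_of_deriv_eq_zero (fun s => (hF s).differentiableAt)
    (fun s => (hF s).deriv) t 0
  linear_combination hconst.trans hF0

lemma narayanaConv_eq (n : ℕ) (t : ℝ) :
    narayanaConv n t = NA (n + 1) t - (t - 1) * NA n t := by
  induction n generalizing t with
  | zero => simp [narayanaConv, NA_zero_s3, NA_one]
  | succ n ih => exact narayanaConv_succ_eq ih t

lemma sum_Icc_NA_mul_Qp_eq_sum_antidiagonal (n : ℕ) (t : ℝ) :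
    ∑ k ∈ Icc 1 n, NA (k - 1) t * Qp (n - k) t
      = ∑ p ∈ antidiagonal n, NA p.1 t * deriv (NA p.2) t := by
  cases n with
  | zero => simp [deriv_NA_zero]
  | succ n =>
    rw [Nat.sum_antidiagonal_succ', ← Ico_add_one_right_eq_Icc, sum_Ico_eq_sum_range,
      Nat.sum_antidiagonal_eq_sum_range_succ_mk]
    simp [deriv_NA_zero, deriv_NA_succ, add_comm 1, Nat.add_sub_add_right]

theorem stmt3_general (n : ℕ) (t : ℝ) :
    Qp n t = ((n : ℝ) + 1) * NA n t + ∑ k ∈ Finset.Icc 1 n, NA (k - 1) t * Qp (n - k) t := by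
  rw [sum_Icc_NA_mul_Qp_eq_sum_antidiagonal,
    sum_antidiagonal_NA_mul_deriv_of_narayanaConv (narayanaConv_eq n)]
  ring

theorem stmt3 (n : ℕ) (hn : 1 ≤ n) (t : ℝ) :
    Qp n t = ((n : ℝ) + 1) * NA n t + ∑ k ∈ Finset.Icc 1 n, NA (k - 1) t * Qp (n - k) t :=
  stmt3_general n t
end

section
/- For every integer n ≥ 1, the type A Narayana polynomials satisfy the recurrence N^A_n(t) = t · N^A_{n-1}(t) + Σ_{k=1}^{n-1} N^A_{k-1}(t) · N^A_{n-k}(t). -/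
/-
Substituting `t = 1 + s` turns the Narayana polynomial into
`N^A_n(1 + s) = ∑_{i + k = n} C_k binom(i + 2k, 2k) s^i` (`C_k` the Catalan numbers):
expand `t^m = (1 + s)^m` and evaluate the coefficient of `s^i` by Vandermonde's identity.
In this basis the recurrence, rewritten as `N_{n+1} = s N_n + ∑_{i + j = n} N_i N_j`, holds
coefficientwise by the upper Vandermonde identity
`∑_{i + j = m} binom(a + i, a) binom(b + j, b) = binom(a + b + 1 + m, a + b + 1)`,
Segner's recurrence for the Catalan numbers and Pascal's rule.
-/

open Finset

namespace Finset.Nat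

variable {M : Type*} [AddCommMonoid M]

theorem sum_antidiagonal_sum_antidiagonal_assoc (f : ℕ → ℕ → ℕ → M) (n : ℕ) :
    ∑ x ∈ antidiagonal n, ∑ y ∈ antidiagonal x.1, f y.1 y.2 x.2 =
      ∑ x ∈ antidiagonal n, ∑ y ∈ antidiagonal x.2, f x.1 y.1 y.2 := by
  rw [sum_sigma', sum_sigma']
  refine sum_nbij' (fun a ↦ ⟨(a.2.1, a.2.2 + a.1.2), (a.2.2, a.1.2)⟩)
    (fun a ↦ ⟨(a.1.1 + a.2.1, a.2.2), (a.1.1, a.2.1)⟩) ?_ ?_ ?_ ?_ ?_ <;>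
  · rintro ⟨⟨a, b⟩, ⟨c, d⟩⟩ h
    simp only [mem_sigma, HasAntidiagonal.mem_antidiagonal] at h
    obtain ⟨rfl, rfl⟩ := h
    simp [add_assoc]

theorem sum_antidiagonal_sum_antidiagonal_interchange (f : ℕ → ℕ → ℕ → ℕ → M) (n : ℕ) :
    ∑ x ∈ antidiagonal n, ∑ y ∈ antidiagonal x.1, ∑ z ∈ antidiagonal x.2, f y.1 y.2 z.1 z.2 =
      ∑ x ∈ antidiagonal n, ∑ y ∈ antidiagonal x.1, ∑ z ∈ antidiagonal x.2,
        f y.1 z.1 y.2 z.2 := by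
  simp_rw [← sum_product', sum_sigma']
  let τ (x : Σ _ : ℕ × ℕ, (ℕ × ℕ) × (ℕ × ℕ)) : Σ _ : ℕ × ℕ, (ℕ × ℕ) × (ℕ × ℕ) :=
    ⟨(x.2.1.1 + x.2.2.1, x.2.1.2 + x.2.2.2), ((x.2.1.1, x.2.2.1), (x.2.1.2, x.2.2.2))⟩
  refine sum_nbij' τ τ ?_ ?_ ?_ ?_ ?_ <;>
  · rintro ⟨⟨a, b⟩, ⟨⟨c, d⟩, ⟨e, g⟩⟩⟩ h
    simp only [mem_sigma, mem_product, HasAntidiagonal.mem_antidiagonal] at h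
    obtain ⟨rfl, rfl, rfl⟩ := h
    simp [τ, add_add_add_comm]

end Finset.Nat

theorem Finset.sum_Icc_one_eq_sum_range {M : Type*} [AddCommMonoid M] (f : ℕ → M) (n : ℕ) :
    ∑ k ∈ Icc 1 n, f k = ∑ k ∈ range n, f (k + 1) := by
  rw [← Ico_add_one_right_eq_Icc, sum_Ico_eq_sum_range, Nat.add_sub_cancel]
  simp only [add_comm 1]

theorem Nat.sum_antidiagonal_add_choose_mul_add_choose (a b m : ℕ) :
    ∑ x ∈ antidiagonal m, (a + x.1).choose a * (b + x.2).choose b =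
      (a + b + 1 + m).choose (a + b + 1) := by
  have h := congrArg (fun F ↦ PowerSeries.coeff m F.val)
    (PowerSeries.invOneSubPow_add ℤ (a + 1) (b + 1))
  simp only [Units.val_mul, PowerSeries.invOneSubPow_val_succ_eq_mk_add_choose,
    show a + 1 + (b + 1) = a + b + 1 + 1 by ring, PowerSeries.coeff_mul,
    PowerSeries.coeff_mk] at h
  exact_mod_cast h.symm

theorem Nat.add_mul_catalan_mul_choose (i k : ℕ) :
    (i + k) * catalan k * (2 * k + i).choose (2 * k) =
      (i + k).choose i * (i + 2 * k).choose (k + 1) := by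
  apply Nat.eq_of_mul_eq_mul_left k.succ_pos
  have hcat := succ_mul_catalan_eq_centralBinom k
  have hmul := Nat.choose_mul (n := 2 * k + i) (k := 2 * k) (s := k) (by omega)
  have hsucc := Nat.choose_succ_right_eq (i + 2 * k) k
  rw [Nat.centralBinom_eq_two_mul_choose] at hcat
  rw [show 2 * k + i - k = i + k by omega, show 2 * k - k = k by omega] at hmul
  rw [show i + 2 * k - k = i + k by omega] at hsucc
  calc (k + 1) * ((i + k) * catalan k * (2 * k + i).choose (2 * k))
      = (i + k) * ((2 * k + i).choose (2 * k) * (2 * k).choose k) := by rw [← hcat]; ring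
    _ = (i + k) * ((2 * k + i).choose k * (i + k).choose k) := by rw [hmul]
    _ = (k + 1) * ((i + k).choose i * (i + 2 * k).choose (k + 1)) := by
      rw [Nat.choose_symm_add, add_comm (2 * k) i]
      linear_combination (i + k).choose k * hsucc.symm

section ShiftedNarayana

variable {R : Type*} [CommSemiring R]

noncomputable def shiftedNarayana (n : ℕ) (s : R) : R :=
  ∑ x ∈ antidiagonal n, ((catalan x.2 * (2 * x.2 + x.1).choose (2 * x.2) : ℕ) : R) * s ^ x.1

theorem sum_antidiagonal_shiftedNarayana_mul (n : ℕ) (s : R) :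
    ∑ x ∈ antidiagonal n, shiftedNarayana x.1 s * shiftedNarayana x.2 s =
      ∑ x ∈ antidiagonal n,
        ((catalan (x.2 + 1) * (2 * x.2 + 1 + x.1).choose (2 * x.2 + 1) : ℕ) : R) * s ^ x.1 := by
  let u (i k : ℕ) : R := ((catalan k * (2 * k + i).choose (2 * k) : ℕ) : R) * s ^ i
  have h_expand : ∀ x ∈ antidiagonal n, shiftedNarayana x.1 s * shiftedNarayana x.2 s =
      ∑ y ∈ antidiagonal x.1, ∑ z ∈ antidiagonal x.2, u y.1 y.2 * u z.1 z.2 :=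
    fun x _ ↦ sum_mul_sum ..
  rw [sum_congr rfl h_expand,
    Finset.Nat.sum_antidiagonal_sum_antidiagonal_interchange fun i p j q ↦ u i p * u j q]
  refine sum_congr rfl fun x _ ↦ ?_
  rw [sum_comm]
  calc ∑ z ∈ antidiagonal x.2, ∑ y ∈ antidiagonal x.1, u y.1 z.1 * u y.2 z.2
      = ∑ z ∈ antidiagonal x.2, ((catalan z.1 * catalan z.2 *
          ∑ y ∈ antidiagonal x.1, (2 * z.1 + y.1).choose (2 * z.1) *
            (2 * z.2 + y.2).choose (2 * z.2) : ℕ) : R) * s ^ x.1 := by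
        refine sum_congr rfl fun z _ ↦ ?_
        rw [Nat.cast_mul, Nat.cast_sum, mul_sum, sum_mul]
        refine sum_congr rfl fun y hy ↦ ?_
        rw [← mem_antidiagonal.1 hy, pow_add]
        push_cast [u]
        ring
    _ = ∑ z ∈ antidiagonal x.2, ((catalan z.1 * catalan z.2 : ℕ) : R) *
          (((2 * x.2 + 1 + x.1).choose (2 * x.2 + 1) : ℕ) * s ^ x.1) := by
        refine sum_congr rfl fun z hz ↦ ?_
        rw [Nat.sum_antidiagonal_add_choose_mul_add_choose, ← mul_add, ← mem_antidiagonal.1 hz]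
        push_cast
        ring
    _ = _ := by
        rw [← sum_mul, ← Nat.cast_sum, ← catalan_succ']
        push_cast
        ring

theorem shiftedNarayana_succ (n : ℕ) (s : R) :
    shiftedNarayana (n + 1) s =
      s * shiftedNarayana n s +
        ∑ x ∈ antidiagonal n, shiftedNarayana x.1 s * shiftedNarayana x.2 s := by
  -- the truncated `2 * k + i - 1` only matters at `k = 0`, where `choose _ 0 = 1` anyway
  let h (i k : ℕ) : R := ((catalan k * (2 * k + i - 1).choose (2 * k) : ℕ) : R) * s ^ i
  have h_shift : s * shiftedNarayana n s = ∑ x ∈ antidiagonal (n + 1), h x.1 x.2 := by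
    have h_zero : h 0 (n + 1) = 0 := by
      simp only [h]
      rw [Nat.choose_eq_zero_of_lt (by omega), mul_zero, Nat.cast_zero, zero_mul]
    rw [Nat.sum_antidiagonal_succ, h_zero, zero_add, shiftedNarayana, mul_sum]
    refine sum_congr rfl fun x _ ↦ ?_
    simp only [h, show 2 * x.2 + (x.1 + 1) - 1 = 2 * x.2 + x.1 by omega]
    ring
  rw [sum_antidiagonal_shiftedNarayana_mul, h_shift, shiftedNarayana, Nat.sum_antidiagonal_succ',
    Nat.sum_antidiagonal_succ', add_assoc, ← sum_add_distrib]
  congr 1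
  · simp [h]
  refine sum_congr rfl fun x _ ↦ ?_
  dsimp only [h]
  rw [show 2 * (x.2 + 1) + x.1 - 1 = 2 * x.2 + 1 + x.1 by omega,
    show 2 * (x.2 + 1) + x.1 = (2 * x.2 + 1 + x.1) + 1 by ring,
    show 2 * (x.2 + 1) = (2 * x.2 + 1) + 1 by ring, Nat.choose_succ_succ']
  push_cast
  ring

theorem natCast_mul_shiftedNarayana (n : ℕ) (s : R) :
    n * shiftedNarayana n s =
      ∑ x ∈ antidiagonal n, ((n.choose x.1 * (n + x.2).choose (x.2 + 1) : ℕ) : R) * s ^ x.1 := by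
  rw [shiftedNarayana, mul_sum]
  refine sum_congr rfl fun ⟨i, k⟩ hx ↦ ?_
  obtain rfl : i + k = n := mem_antidiagonal.1 hx
  rw [show i + k + k = i + 2 * k by ring, ← Nat.add_mul_catalan_mul_choose]
  push_cast
  ring

theorem sum_antidiagonal_choose_mul_choose_mul_add_one_pow (n : ℕ) (s : R) :
    ∑ x ∈ antidiagonal (n + 1), ((n.choose x.1 * n.choose x.2 : ℕ) : R) * (s + 1) ^ x.1 =
      ∑ x ∈ antidiagonal n, ((n.choose x.1 * (n + x.2).choose (x.2 + 1) : ℕ) : R) * s ^ x.1 := by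
  let f (i l b : ℕ) : R := ((n.choose (i + l) * n.choose b * (i + l).choose i : ℕ) : R) * s ^ i
  have h_binom : ∀ x ∈ antidiagonal (n + 1),
      ((n.choose x.1 * n.choose x.2 : ℕ) : R) * (s + 1) ^ x.1 =
        ∑ y ∈ antidiagonal x.1, f y.1 y.2 x.2 := by
    intro x _
    rw [(Commute.all s 1).add_pow', mul_sum]
    refine sum_congr rfl fun y hy ↦ ?_
    rw [← mem_antidiagonal.1 hy]
    simp only [f, one_pow, mul_one, nsmul_eq_mul]
    push_cast
    ring
  have h_vandermonde : ∀ x ∈ antidiagonal (n + 1), ∑ y ∈ antidiagonal x.2, f x.1 y.1 y.2 =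
      ((n.choose x.1 * (n - x.1 + n).choose x.2 : ℕ) : R) * s ^ x.1 := by
    intro x _
    rw [Nat.add_choose_eq, Finset.mul_sum, Nat.cast_sum, sum_mul]
    refine sum_congr rfl fun y _ ↦ ?_
    dsimp only [f]
    rw [Nat.mul_right_comm, Nat.choose_mul (Nat.le_add_right _ _), Nat.add_sub_cancel_left,
      Nat.mul_assoc]
  rw [sum_congr rfl h_binom, Finset.Nat.sum_antidiagonal_sum_antidiagonal_assoc,
    sum_congr rfl h_vandermonde, Nat.sum_antidiagonal_succ', Nat.choose_succ_self]
  simp only [zero_mul, Nat.cast_zero, zero_add]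
  refine sum_congr rfl fun x hx ↦ ?_
  rw [show n - x.1 + n = n + x.2 by have := mem_antidiagonal.1 hx; omega]

end ShiftedNarayana

theorem natCast_mul_NA (n : ℕ) (t : ℝ) :
    n * NA n t = ∑ x ∈ antidiagonal (n + 1), ((n.choose x.1 * n.choose x.2 : ℕ) : ℝ) * t ^ x.1 := by
  rcases n with _ | m
  · simp [Nat.sum_antidiagonal_succ]
  rw [NA, if_neg m.succ_ne_zero, sum_Icc_one_eq_sum_range, mul_sum, Nat.sum_antidiagonal_succ,
    Nat.sum_antidiagonal_eq_sum_range_succ_mk, Nat.succ_eq_add_one, sum_range_succ _ (m + 1)]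
  simp only [Nat.add_sub_cancel, Nat.choose_succ_self, mul_zero, Nat.cast_zero, zero_mul, zero_add,
    add_zero]
  refine sum_congr rfl fun i hi ↦ ?_
  have h_pascal : ((m + 1 : ℕ) : ℝ) * m.choose i = (m + 1).choose (i + 1) * (i + 1) := by
    exact_mod_cast Nat.add_one_mul_choose_eq m i
  rw [Nat.choose_symm (by have := mem_range.1 hi; omega)]
  field_simp
  push_cast at h_pascal ⊢
  linear_combination ((m + 1).choose i * t ^ (i + 1) : ℝ) * h_pascal

theorem NA_add_one (n : ℕ) (s : ℝ) : NA n (s + 1) = shiftedNarayana n s := by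
  rcases eq_or_ne n 0 with rfl | hn
  · simp [NA, shiftedNarayana]
  apply mul_left_cancel₀ (Nat.cast_ne_zero.2 hn)
  rw [natCast_mul_NA, sum_antidiagonal_choose_mul_choose_mul_add_one_pow,
    natCast_mul_shiftedNarayana]

theorem stmt4 (n : ℕ) (hn : 1 ≤ n) (t : ℝ) :
    NA n t = t * NA (n - 1) t + ∑ k ∈ Finset.Icc 1 (n - 1), NA (k - 1) t * NA (n - k) t := by
  obtain ⟨m, rfl⟩ : ∃ m, n = m + 1 := ⟨n - 1, by omega⟩
  have h := shiftedNarayana_succ m (t - 1)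
  simp only [← NA_add_one, sub_add_cancel] at h
  rw [h, Nat.sum_antidiagonal_eq_sum_range_succ (fun i j ↦ NA i t * NA j t), Nat.succ_eq_add_one,
    sum_range_succ, Nat.add_sub_cancel, sum_Icc_one_eq_sum_range]
  simp only [Nat.sub_self, Nat.add_sub_cancel, Nat.add_sub_add_right]
  rw [show NA 0 t = 1 from if_pos rfl]
  ring
end

section
/- Let U_k(ρ), V_k(ρ) be defined by U_0 = V_0 = 1 and the joint recurrences of Theorem 1 (as in the previous context). Then for every k ≥ 0, U_{2k}(0) equals the Fuss–Catalan number binom(3k,k)/(2k+1). -/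
open Finset

noncomputable def fc (n : ℕ) : ℝ := ((3 * n).choose n : ℝ) / (2 * (n : ℝ) + 1)

noncomputable def R2 (n : ℕ) : ℝ := 2 * ((3 * n + 2).choose n : ℝ) / (3 * (n : ℝ) + 2)

lemma fc_zero : fc 0 = 1 := by simp [fc]
lemma R2_zero : R2 0 = 1 := by norm_num [R2]
lemma fc_one : fc 1 = 1 := by norm_num [fc]

lemma absorb₁ (N k : ℕ) :
    ((N : ℝ) + 1) * (N.choose k : ℝ) = ((N + 1).choose (k + 1) : ℝ) * ((k : ℝ) + 1) := by
  have := Nat.add_one_mul_choose_eq N k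
  exact_mod_cast this

lemma absorb₂ (N k : ℕ) (h : k ≤ N + 1) :
    (N.choose k : ℝ) * ((N : ℝ) + 1) = ((N + 1).choose k : ℝ) * ((N : ℝ) + 1 - (k : ℝ)) := by
  have h2 := Nat.choose_mul_succ_eq N k
  have : ((N + 1 - k : ℕ) : ℝ) = (N : ℝ) + 1 - (k : ℝ) := by
    push_cast [Nat.cast_sub h]; ring
  calc (N.choose k : ℝ) * ((N : ℝ) + 1) = ((N.choose k * (N + 1) : ℕ) : ℝ) := by push_cast; ring
    _ = (((N + 1).choose k * (N + 1 - k) : ℕ) : ℝ) := by rw [h2]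
    _ = ((N + 1).choose k : ℝ) * ((N : ℝ) + 1 - (k : ℝ)) := by push_cast [Nat.cast_sub h]; ring

lemma fc_core (m : ℕ) :
    2 * ((m : ℝ) + 1) * (2 * m + 1) * ((3 * m + 3).choose (m + 1) : ℝ)
      = 3 * (3 * (m : ℝ) + 1) * (3 * m + 2) * ((3 * m).choose m : ℝ) := by
  have h1 := absorb₁ (3 * m + 2) m
  have h2 := absorb₂ (3 * m + 1) m (by omega)
  have h3 := absorb₂ (3 * m) m (by omega)
  have e1 : (3 * m + 2) + 1 = 3 * m + 3 := by ring
  have e2 : (3 * m + 1) + 1 = 3 * m + 2 := by ring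
  have e3 : (3 * m) + 1 = 3 * m + 1 := by ring
  rw [e1] at h1; rw [e2] at h2; rw [e3] at h3
  push_cast at h1 h2 h3 ⊢
  linear_combination (-2) * (2 * (m:ℝ) + 1) * h1 - 3 * (2 * (m:ℝ) + 1) * h2 - 3 * (3 * (m:ℝ) + 2) * h3

lemma fc_rat (m : ℕ) :
    fc (m + 1) * (2 * ((m : ℝ) + 1) * (2 * m + 3)) = fc m * (3 * (3 * (m : ℝ) + 1) * (3 * m + 2)) := by
  unfold fc
  have e : 3 * (m + 1) = 3 * m + 3 := by ring
  rw [e]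
  have d1 : (2 * ((m + 1 : ℕ) : ℝ) + 1) ≠ 0 := by positivity
  have d2 : (2 * (m : ℝ) + 1) ≠ 0 := by positivity
  rw [div_mul_eq_mul_div, div_mul_eq_mul_div, div_eq_div_iff d1 d2]
  push_cast
  linear_combination (2 * (m:ℝ) + 3) * fc_core m

noncomputable def Gc (n k : ℕ) : ℝ :=
  2 * k * (2 * k + 1) * (3 * (n : ℝ) - 2 * k + 4) * fc k * fc (n + 1 - k)

lemma cert (n k : ℕ) (hk : k ≤ n) :
    (-2) * ((n : ℝ) + 1) * ((n : ℝ) + 2) * (2 * n + 3) * (fc k * fc (n + 1 - k))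
      + 3 * ((n : ℝ) + 1) * (3 * n + 2) * (3 * n + 4) * (fc k * fc (n - k)) =
    Gc n (k + 1) - Gc n k := by
  have e1 : n + 1 - k = (n - k) + 1 := by omega
  have e2 : n + 1 - (k + 1) = n - k := by omega
  unfold Gc
  rw [e1, e2]
  have hx : ((n - k : ℕ) : ℝ) = (n : ℝ) - k := by
    push_cast [Nat.cast_sub hk]; ring
  have rel1 := fc_rat k
  have rel2 := fc_rat (n - k)
  rw [hx] at rel2
  push_cast at rel1 rel2 ⊢
  linear_combination (-(3 * (n : ℝ) - 2 * k + 2) * fc (n - k)) * rel1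
    + (-((n : ℝ) + 2 * k + 2) * fc k) * rel2

noncomputable def Sc (n : ℕ) : ℝ := ∑ k ∈ range (n + 1), fc k * fc (n - k)

lemma Sc_rec (n : ℕ) :
    2 * ((n : ℝ) + 2) * (2 * n + 3) * Sc (n + 1) = 3 * (3 * (n : ℝ) + 2) * (3 * n + 4) * Sc n := by
  have hsum : ∑ k ∈ range (n + 1),
      ((-2) * ((n : ℝ) + 1) * ((n : ℝ) + 2) * (2 * n + 3) * (fc k * fc (n + 1 - k))
        + 3 * ((n : ℝ) + 1) * (3 * n + 2) * (3 * n + 4) * (fc k * fc (n - k)))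
      = Gc n (n + 1) - Gc n 0 := by
    rw [← Finset.sum_range_sub (fun k => Gc n k) (n + 1)]
    exact Finset.sum_congr rfl fun k hk => cert n k (by simpa using Nat.lt_succ_iff.mp (Finset.mem_range.mp hk))
  rw [Finset.sum_add_distrib, ← Finset.mul_sum, ← Finset.mul_sum] at hsum
  have hS1 : ∑ k ∈ range (n + 1), fc k * fc (n + 1 - k) = Sc (n + 1) - fc (n + 1) := by
    have h := Finset.sum_range_succ (fun k => fc k * fc (n + 1 - k)) (n + 1)
    simp only [Nat.sub_self, fc_zero, mul_one] at h
    unfold Sc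
    rw [h]
    ring
  rw [hS1] at hsum
  have hG1 : Gc n (n + 1) = 2 * ((n:ℝ) + 1) * (2 * n + 3) * ((n:ℝ) + 2) * fc (n + 1) := by
    unfold Gc
    have : n + 1 - (n + 1) = 0 := by omega
    rw [this, fc_zero]
    push_cast; ring
  have hG0 : Gc n 0 = 0 := by unfold Gc; push_cast; ring
  rw [hG1, hG0] at hsum
  have hn1 : ((n : ℝ) + 1) ≠ 0 := by positivity
  apply mul_left_cancel₀ hn1
  unfold Sc at hsum ⊢
  ring_nf at hsum ⊢
  linarith [hsum]

lemma R2_mul (n : ℕ) : R2 n * (3 * (n : ℝ) + 2) = 2 * ((3 * n + 2).choose n : ℝ) := by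
  unfold R2
  have d : (3 * (n : ℝ) + 2) ≠ 0 := by positivity
  field_simp

lemma R2_rec (n : ℕ) :
    2 * ((n : ℝ) + 2) * (2 * n + 3) * R2 (n + 1) = 3 * (3 * (n : ℝ) + 2) * (3 * n + 4) * R2 n := by
  have m1 := R2_mul (n + 1)
  have em : 3 * (n + 1) + 2 = 3 * n + 5 := by ring
  rw [em] at m1
  push_cast at m1
  have m2 := R2_mul n
  have r1 := absorb₁ (3 * n + 4) n
  have r2 := absorb₂ (3 * n + 3) n (by omega)
  have r3 := absorb₂ (3 * n + 2) n (by omega)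
  have e1 : 3 * n + 4 + 1 = 3 * n + 5 := by ring
  have e2 : 3 * n + 3 + 1 = 3 * n + 4 := by ring
  have e3 : 3 * n + 2 + 1 = 3 * n + 3 := by ring
  rw [e1] at r1; rw [e2] at r2; rw [e3] at r3
  push_cast at r1 r2 r3
  have hd : ((3 * (n:ℝ) + 5) * (3 * (n:ℝ) + 2) * ((n:ℝ) + 1)) ≠ 0 := by positivity
  apply mul_left_cancel₀ hd
  linear_combination (2 * ((n:ℝ) + 2) * (2 * n + 3) * (3 * n + 2) * (n + 1)) * m1
    + (-3 * (3 * (n:ℝ) + 2) * (3 * n + 4) * (3 * n + 5) * (n + 1)) * m2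
    + (-4 * ((n:ℝ) + 2) * (2 * n + 3) * (3 * n + 2)) * r1
    + (-2 * (2 * (n:ℝ) + 3) * (3 * n + 2) * (3 * n + 5)) * r2
    + (-2 * (3 * (n:ℝ) + 2) * (3 * n + 4) * (3 * n + 5)) * r3

lemma Sc_eq (n : ℕ) : Sc n = R2 n := by
  induction n with
  | zero => simp [Sc, fc_zero, R2_zero]
  | succ n ih =>
    have h1 := Sc_rec n
    rw [ih] at h1
    have h2 := R2_rec n
    have d : (2 * ((n : ℝ) + 2) * (2 * n + 3)) ≠ 0 := by positivity
    apply mul_left_cancel₀ d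
    calc 2 * ((n : ℝ) + 2) * (2 * n + 3) * Sc (n + 1) = 3 * (3 * (n : ℝ) + 2) * (3 * n + 4) * R2 n := h1
      _ = 2 * ((n : ℝ) + 2) * (2 * n + 3) * R2 (n + 1) := (R2_rec n).symm

lemma fc_mul (m : ℕ) : ((3 * m).choose m : ℝ) = (2 * (m : ℝ) + 1) * fc m := by
  unfold fc
  have d : (2 * (m : ℝ) + 1) ≠ 0 := by positivity
  field_simp

lemma star0 (n : ℕ) :
    ∑ k ∈ range (n + 1), fc k * (((3 * (n - k)).choose (n - k) : ℕ) : ℝ)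
      = ((3 * n + 1).choose n : ℝ) := by
  have h1 : ∑ k ∈ range (n + 1), fc k * (((3 * (n - k)).choose (n - k) : ℕ) : ℝ)
      = ∑ k ∈ range (n + 1), (2 * ((n - k : ℕ) : ℝ) + 1) * (fc k * fc (n - k)) := by
    refine Finset.sum_congr rfl fun k hk => ?_
    rw [fc_mul (n - k)]
    ring
  have hrefl := Finset.sum_range_reflect (fun k => (2 * (k : ℝ) + 1) * (fc (n - k) * fc k)) (n + 1)
  have h2 : ∑ k ∈ range (n + 1), (2 * ((n - k : ℕ) : ℝ) + 1) * (fc k * fc (n - k))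
      = ∑ k ∈ range (n + 1), (2 * (k : ℝ) + 1) * (fc k * fc (n - k)) := by
    calc ∑ k ∈ range (n + 1), (2 * ((n - k : ℕ) : ℝ) + 1) * (fc k * fc (n - k))
        = ∑ j ∈ range (n + 1), (2 * ((n + 1 - 1 - j : ℕ) : ℝ) + 1) * (fc (n - (n + 1 - 1 - j)) * fc (n + 1 - 1 - j)) := by
          refine Finset.sum_congr rfl fun j hj => ?_
          have hj' : j ≤ n := by simpa using Nat.lt_succ_iff.mp (Finset.mem_range.mp hj)
          have e1 : n + 1 - 1 - j = n - j := by omega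
          have e2 : n - (n - j) = j := by omega
          rw [e1, e2]
      _ = ∑ j ∈ range (n + 1), (2 * (j : ℝ) + 1) * (fc (n - j) * fc j) := hrefl
      _ = ∑ k ∈ range (n + 1), (2 * (k : ℝ) + 1) * (fc k * fc (n - k)) := by
          refine Finset.sum_congr rfl fun j hj => ?_
          ring
  have h3 : (∑ k ∈ range (n + 1), (2 * ((n - k : ℕ) : ℝ) + 1) * (fc k * fc (n - k)))
      + ∑ k ∈ range (n + 1), (2 * (k : ℝ) + 1) * (fc k * fc (n - k))
      = (2 * (n : ℝ) + 2) * Sc n := by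
    rw [← Finset.sum_add_distrib]
    unfold Sc
    rw [Finset.mul_sum]
    refine Finset.sum_congr rfl fun k hk => ?_
    have hk' : k ≤ n := by simpa using Nat.lt_succ_iff.mp (Finset.mem_range.mp hk)
    have e : ((n - k : ℕ) : ℝ) = (n : ℝ) - k := by push_cast [Nat.cast_sub hk']; ring
    rw [e]
    ring
  have h4 : ∑ k ∈ range (n + 1), (2 * ((n - k : ℕ) : ℝ) + 1) * (fc k * fc (n - k))
      = ((n : ℝ) + 1) * R2 n := by
    have := h3
    rw [h2] at this ⊢
    rw [Sc_eq] at this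
    linarith [this]
  rw [h1, h4]
  -- (n+1) * R2 n = C(3n+1, n)
  have m2 := R2_mul n
  have r := absorb₂ (3 * n + 1) n (by omega)
  have e2 : 3 * n + 1 + 1 = 3 * n + 2 := by ring
  rw [e2] at r
  push_cast at r
  have hd : (3 * (n : ℝ) + 2) ≠ 0 := by positivity
  apply mul_right_cancel₀ hd
  linear_combination ((n : ℝ) + 1) * m2 - r

lemma starSum : ∀ n y : ℕ,
    ∑ k ∈ range (n + 1), fc k * (((y + 3 * (n - k)).choose (n - k) : ℕ) : ℝ)
      = (((y + 3 * n + 1).choose n : ℕ) : ℝ) := by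
  intro n
  induction n using Nat.strong_induction_on with
  | _ n IH =>
    cases n with
    | zero => intro y; simp [fc_zero]
    | succ m =>
      intro y
      induction y with
      | zero => simpa using star0 (m + 1)
      | succ y hy =>
        have IHm := IH m (Nat.lt_succ_self m) (y + 3)
        have key : ∀ k ∈ range (m + 1),
            fc k * (((y + 1 + 3 * (m + 1 - k)).choose (m + 1 - k) : ℕ) : ℝ)
            = fc k * (((y + 3 * (m + 1 - k)).choose (m + 1 - k) : ℕ) : ℝ)
              + fc k * (((y + 3 + 3 * (m - k)).choose (m - k) : ℕ) : ℝ) := by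
          intro k hk
          have e2 : m + 1 - k = (m - k) + 1 := by
            have := Finset.mem_range.mp hk; omega
          rw [e2]
          have e1 : y + 1 + 3 * ((m - k) + 1) = (y + 3 * ((m - k) + 1)) + 1 := by ring
          rw [e1, Nat.choose_succ_succ]
          have e3 : y + 3 * ((m - k) + 1) = y + 3 + 3 * (m - k) := by ring
          rw [e3]
          push_cast
          ring
        rw [Finset.sum_range_succ, Finset.sum_congr rfl key, Finset.sum_add_distrib]
        rw [Finset.sum_range_succ] at hy
        simp only [Nat.sub_self, Nat.mul_zero, Nat.add_zero, Nat.choose_zero_right,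
          Nat.cast_one, mul_one] at hy ⊢
        have pas := Nat.choose_succ_succ (y + 3 * (m + 1) + 1) m
        have ep : y + 1 + 3 * (m + 1) + 1 = (y + 3 * (m + 1) + 1) + 1 := by ring
        rw [ep]
        have em : y + 3 + 3 * m + 1 = y + 3 * (m + 1) + 1 := by ring
        rw [em] at IHm
        rw [pas]
        push_cast
        linarith [hy, IHm]

lemma R2dec (j : ℕ) :
    R2 (j + 1) = (((3 * j + 5).choose (j + 1) : ℕ) : ℝ) - 3 * (((3 * j + 4).choose j : ℕ) : ℝ) := by
  have m1 := R2_mul (j + 1)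
  have em : 3 * (j + 1) + 2 = 3 * j + 5 := by ring
  rw [em] at m1
  push_cast at m1
  have r := absorb₁ (3 * j + 4) j
  have er : 3 * j + 4 + 1 = 3 * j + 5 := by ring
  rw [er] at r
  push_cast at r
  have hd : (3 * (j : ℝ) + 5) ≠ 0 := by positivity
  apply mul_left_cancel₀ hd
  linear_combination m1 + 3 * r

lemma fin_id (j : ℕ) :
    (((3 * j + 6).choose (j + 1) : ℕ) : ℝ) - 3 * (((3 * j + 5).choose j : ℕ) : ℝ) = fc (j + 2) := by
  have r1 := absorb₁ (3 * j + 5) j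
  have e1 : 3 * j + 5 + 1 = 3 * j + 6 := by ring
  rw [e1] at r1
  have r2 := Nat.choose_succ_right_eq (3 * j + 6) (j + 1)
  have e2 : 3 * j + 6 - (j + 1) = 2 * j + 5 := by omega
  rw [e2] at r2
  have fm := fc_mul (j + 2)
  have e3 : 3 * (j + 2) = 3 * j + 6 := by ring
  rw [e3] at fm
  have r2c : ((3 * j + 6).choose (j + 2) : ℝ) * ((j : ℝ) + 2) = ((3 * j + 6).choose (j + 1) : ℝ) * (2 * (j : ℝ) + 5) := by
    exact_mod_cast r2
  push_cast at r1 fm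
  have hd : (((j : ℝ) + 2) * (2 * (j : ℝ) + 5)) ≠ 0 := by positivity
  apply mul_left_cancel₀ hd
  linear_combination (-1) * r2c + ((j : ℝ) + 2) * fm + (-(2 * (j : ℝ) + 5)) * r1

lemma Tsum (n : ℕ) : ∑ k ∈ range (n + 1), fc k * R2 (n - k) = fc (n + 1) := by
  cases n with
  | zero => simp [R2_zero, fc_zero, fc_one]
  | succ m =>
    have key : ∀ k ∈ range (m + 1),
        fc k * R2 (m + 1 - k)
        = fc k * (((2 + 3 * (m + 1 - k)).choose (m + 1 - k) : ℕ) : ℝ)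
          - 3 * (fc k * (((4 + 3 * (m - k)).choose (m - k) : ℕ) : ℝ)) := by
      intro k hk
      have e2 : m + 1 - k = (m - k) + 1 := by have := Finset.mem_range.mp hk; omega
      rw [e2, R2dec (m - k)]
      have e3 : 2 + 3 * ((m - k) + 1) = 3 * (m - k) + 5 := by ring
      have e4 : 4 + 3 * (m - k) = 3 * (m - k) + 4 := by ring
      rw [e3, e4]
      ring
    rw [Finset.sum_range_succ, Finset.sum_congr rfl key, Finset.sum_sub_distrib]
    simp only [Nat.sub_self]
    rw [R2_zero, mul_one]
    have s1 := starSum (m + 1) 2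
    rw [Finset.sum_range_succ] at s1
    simp only [Nat.sub_self, Nat.mul_zero, Nat.add_zero, Nat.choose_zero_right,
      Nat.cast_one, mul_one] at s1
    have s2 := starSum m 4
    have hf := fin_id m
    have e5 : 2 + 3 * (m + 1) + 1 = 3 * m + 6 := by ring
    rw [e5] at s1
    have e6 : 4 + 3 * m + 1 = 3 * m + 5 := by ring
    rw [e6] at s2
    rw [← Finset.mul_sum, s2]
    have em : m + 1 + 1 = m + 2 := rfl
    rw [em]
    linarith [s1, hf]

theorem stmt11 (U V : ℕ → ℝ → ℝ)
    (hU0 : ∀ ρ : ℝ, U 0 ρ = 1) (hV0 : ∀ ρ : ℝ, V 0 ρ = 1)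
    (hU : ∀ (k : ℕ) (ρ : ℝ), U (k + 1) ρ =
      (∑ i ∈ Finset.range ((k + 1) / 2), U (k - 2 * i - 1) ρ * V (2 * i + 1) ρ)
      + ρ * ∑ i ∈ Finset.range (k / 2 + 1), V (2 * i) ρ * U (k - 2 * i) ρ)
    (hV : ∀ (k : ℕ) (ρ : ℝ), V (k + 1) ρ =
      (∑ i ∈ Finset.range (k / 2 + 1), U (2 * i) ρ * V (k - 2 * i) ρ)
      + ρ * ∑ i ∈ Finset.range ((k + 1) / 2), U (2 * i + 1) ρ * V (k - 2 * i - 1) ρ) :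
    ∀ k : ℕ, U (2 * k) 0 = ((3 * k).choose k : ℝ) / (2 * (k : ℝ) + 1) := by
  have key : ∀ n : ℕ, (U n 0 = if n % 2 = 0 then fc (n / 2) else 0) ∧
      (V n 0 = if n % 2 = 0 then fc (n / 2) else R2 (n / 2)) := by
    intro n
    induction n using Nat.strong_induction_on with
    | _ n IH =>
      cases n with
      | zero => simp [hU0, hV0, fc_zero]
      | succ n =>
        have hUsum : U (n + 1) 0 = ∑ i ∈ Finset.range ((n + 1) / 2), U (n - 2 * i - 1) 0 * V (2 * i + 1) 0 := by
          rw [hU n 0, zero_mul, add_zero]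
        have hVsum : V (n + 1) 0 = ∑ i ∈ Finset.range (n / 2 + 1), U (2 * i) 0 * V (n - 2 * i) 0 := by
          rw [hV n 0, zero_mul, add_zero]
        rcases Nat.even_or_odd n with ⟨m, rfl⟩ | ⟨m, rfl⟩
        · -- n = m + m
          constructor
          · rw [hUsum, if_neg (by omega)]
            apply Finset.sum_eq_zero
            intro i hi
            have hi' : i < (m + m + 1) / 2 := Finset.mem_range.mp hi
            have h1 := (IH (m + m - 2 * i - 1) (by omega)).1
            rw [h1, if_neg (by omega), zero_mul]
          · rw [hVsum, if_neg (by omega)]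
            have e : (m + m + 1) / 2 = m := by omega
            rw [e]
            have e2 : (m + m) / 2 + 1 = m + 1 := by omega
            rw [e2]
            have hterm : ∀ i ∈ range (m + 1), U (2 * i) 0 * V (m + m - 2 * i) 0 = fc i * fc (m - i) := by
              intro i hi
              have hi' : i ≤ m := by simpa using Nat.lt_succ_iff.mp (Finset.mem_range.mp hi)
              have h1 := (IH (2 * i) (by omega)).1
              have h2 := (IH (m + m - 2 * i) (by omega)).2
              rw [h1, if_pos (by omega), h2, if_pos (by omega)]
              have e3 : 2 * i / 2 = i := by omega
              have e4 : (m + m - 2 * i) / 2 = m - i := by omega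
              rw [e3, e4]
            rw [Finset.sum_congr rfl hterm]
            rw [← Sc_eq]
            rfl
        · -- n = 2 * m + 1
          constructor
          · rw [hUsum, if_pos (by omega)]
            have e : (2 * m + 1 + 1) / 2 = m + 1 := by omega
            have e' : (2 * m + 1 + 1) / 2 = m + 1 := e
            rw [e]
            have hterm : ∀ i ∈ range (m + 1), U (2 * m + 1 - 2 * i - 1) 0 * V (2 * i + 1) 0 = fc (m - i) * R2 i := by
              intro i hi
              have hi' : i ≤ m := by simpa using Nat.lt_succ_iff.mp (Finset.mem_range.mp hi)
              have h1 := (IH (2 * m + 1 - 2 * i - 1) (by omega)).1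
              have h2 := (IH (2 * i + 1) (by omega)).2
              rw [h1, if_pos (by omega), h2, if_neg (by omega)]
              have e3 : (2 * m + 1 - 2 * i - 1) / 2 = m - i := by omega
              have e4 : (2 * i + 1) / 2 = i := by omega
              rw [e3, e4]
            rw [Finset.sum_congr rfl hterm]
            have hrefl := Finset.sum_range_reflect (fun k => fc k * R2 (m - k)) (m + 1)
            have h5 : ∑ i ∈ range (m + 1), fc (m - i) * R2 i = ∑ k ∈ range (m + 1), fc k * R2 (m - k) := by
              rw [← hrefl]
              refine Finset.sum_congr rfl fun j hj => ?_
              have hj' : j ≤ m := by simpa using Nat.lt_succ_iff.mp (Finset.mem_range.mp hj)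
              have e5 : m + 1 - 1 - j = m - j := by omega
              have e6 : m - (m - j) = j := by omega
              rw [e5, e6]
            rw [h5, Tsum]
          · rw [hVsum, if_pos (by omega)]
            have e : (2 * m + 1) / 2 + 1 = m + 1 := by omega
            rw [e]
            have hterm : ∀ i ∈ range (m + 1), U (2 * i) 0 * V (2 * m + 1 - 2 * i) 0 = fc i * R2 (m - i) := by
              intro i hi
              have hi' : i ≤ m := by simpa using Nat.lt_succ_iff.mp (Finset.mem_range.mp hi)
              have h1 := (IH (2 * i) (by omega)).1
              have h2 := (IH (2 * m + 1 - 2 * i) (by omega)).2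
              rw [h1, if_pos (by omega), h2, if_neg (by omega)]
              have e3 : 2 * i / 2 = i := by omega
              have e4 : (2 * m + 1 - 2 * i) / 2 = m - i := by omega
              rw [e3, e4]
            rw [Finset.sum_congr rfl hterm, Tsum]
            have e7 : (2 * m + 1 + 1) / 2 = m + 1 := by omega
            rw [e7]
  intro k
  have h := (key (2 * k)).1
  rw [if_pos (by omega)] at h
  have e : 2 * k / 2 = k := by omega
  rw [e] at h
  rw [h]
  rfl
end

section
/- The generating function of type B Narayana polynomials satisfies Σ_{n=0}^∞ N^B_n(t) x^n = 1/√((1-(t-1)x)² - 4x), as an identity of formal power series in x (or for real x, t with |x| small enough), where N^B_n(t) = Σ_{k=0}^n binom(n,k)^2 t^k. -/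
open Finset

/-!
The coefficients satisfy the Legendre-type recurrence
`(n + 2) N_{n+2} = (2n + 3)(1 + t) N_{n+1} - (n + 1)(t - 1)² N_n`, which follows coefficientwise
in `t` from Pascal's rule and a quadratic relation between `C(n,k)`, `C(n,k+1)`, `C(n,k+2)`.
For `f = ∑ N_n xⁿ` and `G = (1 - (t - 1)x)² - 4x = 1 - 2(1 + t)x + (t - 1)²x²` this recurrence says
exactly `2 f' G + G' f = 0`, so `(f² G)' = f (2 f' G + G' f) = 0` and `f² G` is its constant term `1`.
-/

theorem Nat.cast_choose_succ_right_eq {R : Type*} [Ring R] (n k : ℕ) :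
    (n.choose (k + 1) : R) * (k + 1) = n.choose k * (n - k) := by
  rcases le_or_gt k n with hkn | hnk
  · have h := congrArg (Nat.cast : ℕ → R) (n.choose_succ_right_eq k)
    push_cast [hkn] at h
    exact h
  · simp [Nat.choose_eq_zero_of_lt hnk, Nat.choose_eq_zero_of_lt (hnk.trans k.lt_succ_self)]

theorem Nat.cast_choose_quadratic_relation {K : Type*} [Field K] [CharZero K] (n k : ℕ) :
    (n.choose k : K) * n.choose (k + 1) + n.choose (k + 1) * n.choose (k + 2)
      + (n + 2) * n.choose k * n.choose (k + 2) = n * (n.choose (k + 1) : K) ^ 2 := by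
  have hk₁ : (k + 1 : K) ≠ 0 := by norm_cast
  have hk₂ : (k + 1 + 1 : K) ≠ 0 := by norm_cast
  have hb := eq_div_of_mul_eq hk₁ (Nat.cast_choose_succ_right_eq (R := K) n k)
  have hc := Nat.cast_choose_succ_right_eq (R := K) n (k + 1)
  push_cast at hc
  rw [eq_div_of_mul_eq hk₂ hc, hb]
  field_simp
  ring

theorem Nat.cast_choose_sq_three_term {K : Type*} [Field K] [CharZero K] (n k : ℕ) :
    (n + 2) * ((n + 2).choose (k + 2) : K) ^ 2 + (n + 1) * (n.choose k : K) ^ 2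
      + (n + 1) * (n.choose (k + 2) : K) ^ 2
    = (2 * n + 3) * ((n + 1).choose (k + 2) : K) ^ 2
      + (2 * n + 3) * ((n + 1).choose (k + 1) : K) ^ 2 + (2 * n + 2) * (n.choose (k + 1) : K) ^ 2 := by
  rw [Nat.choose_succ_succ' (n + 1) (k + 1), Nat.choose_succ_succ' n k,
    Nat.choose_succ_succ' n (k + 1)]
  push_cast
  linear_combination 2 * Nat.cast_choose_quadratic_relation (K := K) n k

section NarayanaPolynomial

open Polynomial

noncomputable def narayanaB (K : Type*) [Semiring K] (n : ℕ) : K[X] :=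
  ∑ k ∈ range (n + 1), C ((n.choose k : K) ^ 2) * X ^ k

theorem coeff_narayanaB {K : Type*} [Semiring K] (n k : ℕ) :
    (narayanaB K n).coeff k = (n.choose k : K) ^ 2 := by
  simp only [narayanaB, finsetSum_coeff, coeff_C_mul_X_pow]
  rw [sum_ite_eq]
  split_ifs with h
  · rfl
  · rw [Nat.choose_eq_zero_of_lt (by simpa using h)]
    simp

theorem narayanaB_recurrence {K : Type*} [Field K] [CharZero K] (n : ℕ) :
    C ((n : K) + 2) * narayanaB K (n + 2) + C ((n : K) + 1) * (X ^ 2 * narayanaB K n)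
      + C ((n : K) + 1) * narayanaB K n
    = C (2 * (n : K) + 3) * (X * narayanaB K (n + 1)) + C (2 * (n : K) + 3) * narayanaB K (n + 1)
      + C (2 * (n : K) + 2) * (X * narayanaB K n) := by
  ext (_ | _ | k) <;>
    simp only [coeff_add, coeff_C_mul, coeff_X_pow_mul', coeff_X_mul, coeff_X_mul_zero,
      coeff_narayanaB]
  · simp only [Nat.choose_zero_right, Nat.cast_one, one_pow, nonpos_iff_eq_zero,
      OfNat.ofNat_ne_zero, ↓reduceIte]
    ring
  · simp only [zero_add, Nat.choose_one_right, Nat.choose_zero_right, Nat.not_ofNat_le_one,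
      ↓reduceIte]
    push_cast
    ring
  · simp only [le_add_iff_nonneg_left, zero_le, ↓reduceIte, Nat.reduceSubDiff]
    linear_combination Nat.cast_choose_sq_three_term (K := K) n k

theorem eval_narayanaB (n : ℕ) (t : ℝ) : (narayanaB ℝ n).eval t = NB n t := by
  simp [NB, narayanaB, eval_finsetSum]

theorem NB_recurrence (n : ℕ) (t : ℝ) :
    (n + 2) * NB (n + 2) t = (2 * n + 3) * (1 + t) * NB (n + 1) t - (n + 1) * (t - 1) ^ 2 * NB n t := by
  have h := congrArg (eval t) (narayanaB_recurrence (K := ℝ) n)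
  simp only [eval_add, eval_mul, eval_C, eval_pow, eval_X, eval_narayanaB] at h
  linear_combination h

end NarayanaPolynomial

open PowerSeries

theorem two_derivative_mul_add_derivative_mul_eq_zero_of_recurrence {R : Type*} [CommRing R]
    {f : R⟦X⟧} (u v : R) (h₀ : 2 * coeff 1 f = u * coeff 0 f)
    (hrec : ∀ m : ℕ, 2 * (m + 2) * coeff (m + 2) f
      = (2 * m + 3) * u * coeff (m + 1) f - 2 * (m + 1) * v * coeff m f) :
    2 * d⁄dX R f * (1 - C u * X + C v * X ^ 2) + d⁄dX R (1 - C u * X + C v * X ^ 2) * f = 0 := by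
  have hG : d⁄dX R (1 - C u * X + C v * X ^ 2) = C v * (2 * X) - C u := by
    simp only [map_add, map_sub, Derivation.leibniz, Derivation.leibniz_pow, derivative_C,
      derivative_X, derivative_one, smul_eq_mul]
    ring
  -- a shape in which every coefficient is read off by `coeff_C_mul` and `coeff_succ_X_mul`
  have hnf : 2 * d⁄dX R f * (1 - C u * X + C v * X ^ 2) + (C v * (2 * X) - C u) * f
      = C 2 * d⁄dX R f - C u * (C 2 * (X * d⁄dX R f) + f)
        + C v * (C 2 * (X * (X * d⁄dX R f)) + C 2 * (X * f)) := by
    simp only [map_ofNat]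
    ring
  rw [hG, hnf]
  ext (_ | _ | m)
  · simp only [map_add, map_sub, coeff_C_mul, coeff_derivative, coeff_zero_X_mul, map_zero]
    linear_combination h₀
  · simp only [map_add, map_sub, coeff_C_mul, coeff_derivative, coeff_succ_X_mul,
      coeff_zero_X_mul, map_zero]
    linear_combination hrec 0
  · simp only [map_add, map_sub, coeff_C_mul, coeff_derivative, coeff_succ_X_mul, map_zero]
    linear_combination (norm := (push_cast; ring)) hrec (m + 1)

theorem sq_mul_eq_C_of_two_derivative_mul_add_derivative_mul_eq_zero {R : Type*} [CommRing R]
    [IsAddTorsionFree R] {f g : R⟦X⟧} (h : 2 * d⁄dX R f * g + d⁄dX R g * f = 0) :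
    f ^ 2 * g = C (constantCoeff f ^ 2 * constantCoeff g) := by
  apply derivative.ext
  · rw [derivative_C, Derivation.leibniz, Derivation.leibniz_pow]
    simp only [smul_eq_mul, nsmul_eq_mul]
    linear_combination f * h
  · simp

open PowerSeries in
theorem stmt15 (t : ℝ) :
    (PowerSeries.mk fun n => NB n t) ^ 2
      * ((1 - PowerSeries.C (R := ℝ) (t - 1) * PowerSeries.X) ^ 2 - 4 * PowerSeries.X) = 1 := by
  have hG : (1 - C (t - 1) * X) ^ 2 - 4 * X = 1 - C (2 * (1 + t)) * X + C ((t - 1) ^ 2) * X ^ 2 := by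
    simp only [map_mul, map_add, map_sub, map_pow, map_one, map_ofNat]
    ring
  have hode := two_derivative_mul_add_derivative_mul_eq_zero_of_recurrence
    (f := PowerSeries.mk fun n => NB n t) (2 * (1 + t)) ((t - 1) ^ 2) (by simp [NB, sum_range_succ])
    (fun m => by simp only [coeff_mk]; linear_combination 2 * NB_recurrence m t)
  rw [hG, sq_mul_eq_C_of_two_derivative_mul_add_derivative_mul_eq_zero hode]
  simp [NB]
end
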